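/- Let G be a finite group and H a subgroup of G such that the Frattini subgroup Φ(G) is not contained in H. Then μ_G(H) = 0 and λ_G(H) = 0. -/

import Mathlib

open Classical in
/-- The Möbius function of a finite partial order with a top element:
`mob ⊤ = 1` and `mob x = -∑_{x < y ≤ ⊤} mob y` for `x ≠ ⊤`. -/
noncomputable def mob {α : Type*} [PartialOrder α] [OrderTop α] [Finite α] (x : α) : ℤ :=
  if x = ⊤ then 1
  else - ∑ y ∈ (Set.toFinite {y : α | x < y}).toFinset.attach, mob y.1
termination_by (Set.toFinite {y : α | x < y}).toFinset.card
decreasing_by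
  have hy : x < y.1 := by
    have h2 := y.2
    rwa [Set.Finite.mem_toFinset] at h2
  refine Finset.card_lt_card ?_
  rw [Finset.ssubset_iff_of_subset]
  · exact ⟨y.1, by rwa [Set.Finite.mem_toFinset], by simp [Set.Finite.mem_toFinset]⟩
  · intro z hz
    rw [Set.Finite.mem_toFinset] at hz ⊢
    exact hy.trans hz

section C

variable (G : Type*) [Group G]

instance subgroupFinite [Finite G] : Finite (Subgroup G) :=
  Finite.of_injective (fun H => (H : Set G)) SetLike.coe_injective

/-- Type synonym for `Subgroup G`, endowed with the preorder `H ≼ K` iff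
`H ≤ gKg⁻¹` for some `g : G`. -/
def CSub := Subgroup G

variable {G}

/-- Conversion from `Subgroup G` to the type synonym `CSub G`. -/
def CSub.mk (H : Subgroup G) : CSub G := H

/-- Conversion from the type synonym `CSub G` to `Subgroup G`. -/
def CSub.toSubgroup (H : CSub G) : Subgroup G := H

variable (G)

instance : Preorder (CSub G) where
  le H K := ∃ g : G, H.toSubgroup ≤ K.toSubgroup.map (MulAut.conj g).toMonoidHom
  le_refl H := ⟨1, by
    simp only [map_one]
    rw [show MulEquiv.toMonoidHom (1 : MulAut G) = MonoidHom.id G from rfl, Subgroup.map_id]⟩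
  le_trans H K L := by
    rintro ⟨g, hg⟩ ⟨h, hh⟩
    refine ⟨g * h, hg.trans ?_⟩
    have hm := Subgroup.map_mono (f := (MulAut.conj g).toMonoidHom) hh
    rw [Subgroup.map_map] at hm
    refine hm.trans (le_of_eq ?_)
    congr 1
    ext x
    simp [mul_assoc]

instance [Finite G] : Finite (CSub G) := subgroupFinite G

/-- The poset of conjugacy classes of subgroups of `G`: for a finite group this is
the quotient of subgroups by conjugacy, with `[H] ≤ [K]` iff `H ≤ gKg⁻¹` for some `g ∈ G`. -/
abbrev ConjClassSub := Antisymmetrization (CSub G) (· ≤ ·)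

/-- The conjugacy class of a subgroup, as an element of `ConjClassSub G`. -/
def conjClassOf (H : Subgroup G) : ConjClassSub G :=
  toAntisymmetrization (α := CSub G) (· ≤ ·) (CSub.mk H)

instance : OrderTop (ConjClassSub G) where
  top := conjClassOf G ⊤
  le_top c := by
    induction c using Quotient.ind with
    | _ H =>
      show toAntisymmetrization (α := CSub G) (· ≤ ·) H ≤
        toAntisymmetrization (α := CSub G) (· ≤ ·) (CSub.mk ⊤)
      rw [toAntisymmetrization_le_toAntisymmetrization_iff]
      refine ⟨1, ?_⟩
      show H.toSubgroup ≤ Subgroup.map (MulAut.conj (1:G)).toMonoidHom (⊤ : Subgroup G)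
      rw [Subgroup.map_top_of_surjective _ (MulAut.conj (1:G)).surjective]
      exact le_top

instance [Finite G] : Finite (ConjClassSub G) := Quotient.finite _

variable {G}

/-- The Möbius function `μ_G` on the subgroup lattice of the finite group `G`. -/
noncomputable def muSub [Finite G] (H : Subgroup G) : ℤ := mob H

/-- The Möbius function `λ_G` on the poset of conjugacy classes of subgroups of the
finite group `G`, evaluated at the class of `H`. -/
noncomputable def lamSub [Finite G] (H : Subgroup G) : ℤ :=
  mob (conjClassOf G H)

/-- `G` satisfies the (μ,λ)-property if `μ_G(H) = [N_{G'}(H) : G' ∩ H] · λ_G(H)`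
for every subgroup `H ≤ G`, where `G' = [G,G]` and `N_{G'}(H) = N_G(H) ∩ G'`. -/
def MuLambdaProperty (G : Type*) [Group G] [Finite G] : Prop :=
  ∀ H : Subgroup G,
    muSub H =
      ((commutator G ⊓ H).relIndex (Subgroup.normalizer (H : Set G) ⊓ commutator G) : ℤ) * lamSub H

/-- `MaxInt G` consists of `G` itself (the subgroup `⊤`) together with all
intersections of nonempty families of maximal subgroups of `G`. -/
def MaxInt (G : Type*) [Group G] : Set (Subgroup G) :=
  {H | H = ⊤ ∨ ∃ S : Set (Subgroup G), S.Nonempty ∧ (∀ M ∈ S, IsCoatom M) ∧ H = sInf S}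

end C

instance {n R : Type*} [DecidableEq n] [Fintype n] [CommRing R] [Finite R] :
    Finite (Matrix.SpecialLinearGroup n R) :=
  Finite.of_injective (fun A => (A : Matrix n n R)) Subtype.coe_injective

open scoped MatrixGroups


/-!
If every `x` not above `r` has a join `z ≠ ⊤` with `r`, then `mob` vanishes off the up-set of `r`:
the interval `(x, ⊤]` splits into `[z, ⊤]`, whose Möbius sum is zero, and elements not above `r`,
where `mob` vanishes by induction. In the subgroup lattice take `r = Φ(G)` and `z = K ⊔ Φ(G)`,
which is proper whenever `K` is, since `Φ(G)` consists of non-generators. As `Φ(G)` is normal,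
`[K ⊔ Φ(G)]` is still the join of `[K]` and `[Φ(G)]` among conjugacy classes, so the same argument
gives `λ_G(H) = 0`.
-/

section Mobius

variable {α : Type*} [PartialOrder α] [OrderTop α] [Finite α]

theorem mob_of_ne_top {x : α} (hx : x ≠ ⊤) : mob x = -∑ᶠ y ∈ Set.Ioi x, mob y := by
  rw [mob, if_neg hx, Finset.sum_attach, finsum_mem_eq_finite_toFinset_sum _ (Set.toFinite _)]
  rfl

theorem finsum_mem_Ici_mob {z : α} (hz : z ≠ ⊤) : ∑ᶠ y ∈ Set.Ici z, mob y = 0 := by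
  rw [← Set.Ioi_insert, finsum_mem_insert _ Set.self_notMem_Ioi (Set.toFinite _),
    mob_of_ne_top hz, neg_add_cancel]

theorem mob_eq_zero_of_not_le {r : α} (hr : ∀ x, ¬r ≤ x → ∃ z ≠ ⊤, IsLUB {x, r} z) {x : α}
    (hx : ¬r ≤ x) : mob x = 0 := by
  induction x using WellFoundedGT.induction with
  | _ x ih =>
  obtain ⟨z, hz, hxz⟩ := hr x hx
  have hx_top : x ≠ ⊤ := fun h => hx (h ▸ le_top)
  have above_r : Set.Ioi x ∩ {y | r ≤ y} = Set.Ici z := by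
    ext y
    simp only [Set.mem_inter_iff, Set.mem_Ioi, Set.mem_ofPred_eq, Set.mem_Ici, isLUB_le_iff hxz,
      upperBounds_insert, upperBounds_singleton]
    exact ⟨fun h => ⟨h.1.le, h.2⟩, fun h => ⟨h.1.lt_of_ne (by rintro rfl; exact hx h.2), h.2⟩⟩
  have not_above_r : ∑ᶠ y ∈ Set.Ioi x \ {y | r ≤ y}, mob y = 0 :=
    finsum_mem_eq_zero_of_forall_eq_zero fun y hy => ih y hy.1 hy.2
  rw [mob_of_ne_top hx_top, ← finsum_mem_inter_add_sdiff {y | r ≤ y} (Set.toFinite _),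
    above_r, finsum_mem_Ici_mob hz, not_above_r, add_zero, neg_zero]

theorem mob_eq_zero_of_not_radical_le {β : Type*} [CompleteLattice β] [Finite β] {x : β}
    (hx : ¬Order.radical β ≤ x) : mob x = 0 := by
  refine mob_eq_zero_of_not_le (fun y hy => ⟨y ⊔ Order.radical β, ?_, isLUB_pair⟩) hx
  exact fun h => hy (Order.radical_nongenerating h ▸ le_top)

end Mobius

section ConjClassSub

variable {G : Type*} [Group G]

theorem conjClassOf_surjective : Function.Surjective (conjClassOf G) :=
  fun c => ⟨ofAntisymmetrization (α := CSub G) _ c, toAntisymmetrization_ofAntisymmetrization _ c⟩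

theorem conjClassOf_le_conjClassOf_iff {H K : Subgroup G} :
    conjClassOf G H ≤ conjClassOf G K ↔ ∃ g : G, H ≤ K.map (MulAut.conj g).toMonoidHom :=
  toAntisymmetrization_le_toAntisymmetrization_iff

theorem conjClassOf_mono {H K : Subgroup G} (h : H ≤ K) : conjClassOf G H ≤ conjClassOf G K :=
  conjClassOf_le_conjClassOf_iff.mpr ⟨1, fun x hx => ⟨x, h hx, by simp⟩⟩

theorem conjClassOf_eq_top_iff {K : Subgroup G} : conjClassOf G K = ⊤ ↔ K = ⊤ := by
  refine ⟨fun h => ?_, fun h => h ▸ rfl⟩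
  obtain ⟨g, hg⟩ := conjClassOf_le_conjClassOf_iff.mp h.ge
  rw [top_le_iff, ← Subgroup.map_top_of_surjective (MulAut.conj g).toMonoidHom
    (MulAut.conj g).surjective] at hg
  exact Subgroup.map_injective (MulAut.conj g).injective hg

theorem le_map_conj_iff_of_normal {N : Subgroup G} [N.Normal] {K : Subgroup G} (g : G) :
    N ≤ K.map (MulAut.conj g).toMonoidHom ↔ N ≤ K := by
  conv_lhs => rw [← Subgroup.Normal.map_conj_eq N g]
  exact Subgroup.map_le_map_iff_of_injective (MulAut.conj g).injective

theorem conjClassOf_le_conjClassOf_iff_of_normal {N : Subgroup G} [N.Normal]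
    {K : Subgroup G} : conjClassOf G N ≤ conjClassOf G K ↔ N ≤ K := by
  rw [conjClassOf_le_conjClassOf_iff]
  exact ⟨fun ⟨g, hg⟩ => (le_map_conj_iff_of_normal g).mp hg,
    fun h => ⟨1, (le_map_conj_iff_of_normal 1).mpr h⟩⟩

theorem isLUB_conjClassOf_sup_of_normal (N : Subgroup G) [N.Normal] (K : Subgroup G) :
    IsLUB {conjClassOf G K, conjClassOf G N} (conjClassOf G (K ⊔ N)) := by
  refine ⟨by simp [upperBounds, conjClassOf_mono le_sup_left, conjClassOf_mono le_sup_right],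
    fun c hc => ?_⟩
  obtain ⟨L, rfl⟩ := conjClassOf_surjective c
  obtain ⟨hK, hN⟩ : conjClassOf G K ≤ conjClassOf G L ∧ conjClassOf G N ≤ conjClassOf G L := by
    simpa [upperBounds] using hc
  obtain ⟨g, hg⟩ := conjClassOf_le_conjClassOf_iff.mp hK
  exact conjClassOf_le_conjClassOf_iff.mpr
    ⟨g, sup_le hg ((le_map_conj_iff_of_normal g).mpr
      (conjClassOf_le_conjClassOf_iff_of_normal.mp hN))⟩

end ConjClassSub

/-- If the Frattini subgroup of `G` is not contained in `H`, then `μ_G(H) = 0` and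
`λ_G(H) = 0`. -/
theorem mu_lam_eq_zero_of_not_frattini_le (G : Type*) [Group G] [Finite G] (H : Subgroup G)
    (h : ¬ frattini G ≤ H) : muSub H = 0 ∧ lamSub H = 0 := by
  have join_frattini : ∀ c : ConjClassSub G, ¬conjClassOf G (frattini G) ≤ c →
      ∃ z ≠ ⊤, IsLUB {c, conjClassOf G (frattini G)} z := by
    intro c hc
    obtain ⟨K, rfl⟩ := conjClassOf_surjective c
    rw [conjClassOf_le_conjClassOf_iff_of_normal] at hc
    refine ⟨conjClassOf G (K ⊔ frattini G), ?_, isLUB_conjClassOf_sup_of_normal _ K⟩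
    rw [Ne, conjClassOf_eq_top_iff]
    exact fun htop => hc (frattini_nongenerating htop ▸ le_top)
  exact ⟨mob_eq_zero_of_not_radical_le h,
    mob_eq_zero_of_not_le join_frattini (mt conjClassOf_le_conjClassOf_iff_of_normal.mp h)⟩
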